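/- Adopt the directional pattern setup and assume Condition (C). For an integer L_0 with 1 ≤ L_0 ≤ L−1, define Ḡ(φ, L_0) = (1/L_0)·Σ_{l=0}^{L_0−1} G_l(φ) + (1/(L−L_0))·Σ_{l=L_0}^{L−1} G_l(φ), and define I_0(L_0) = [−2π/L + φ_B, L_0·2π/L − φ_B]. Then for every integer L_0 with L/2 < L_0 ≤ L−1: inf_{φ ∈ [0, 2π)} Ḡ(φ, L_0) = inf_{φ ∈ I_0(L_0)} Ḡ(φ, L_0). -/

import Mathlib

/-!
Sampling `G` at the angles `χ - j·2π/L` gives an `L`-periodic sequence `h : ℤ → ℝ`, and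
`Ḡ(χ - k·2π/L, L₀)` is the mean of `h` over the long window `[k, k + L₀)` plus its mean over the
short window `[k + L₀, k + L)`. The sum over a whole period does not depend on `k` and
`L - L₀ ≤ L₀`, so `Ḡ` at the shifted angle only grows with the sum over the short window.

The indices `j` for which `χ - j·2π/L` lies in the main lobe form an interval `[a, b]` with at most
`L₀` elements, and `χ - k·2π/L ∈ I₀(L₀)` exactly when the long window of `k` contains it.
Starting from a `χ` outside `I₀(L₀)`, slide the short window off the main lobe; when the main lobe
lies strictly inside the short window this is impossible, but then Condition (C) bounds the short
window's sum below by `(L - L₀)·G_SL`, while a short window of pure sidelobes sums to at most that.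
-/

open Function

section WindowSums

open Finset

variable {M : Type*} [AddCommMonoid M]

theorem sum_Ico_consecutive' {α : Type*} [LinearOrder α] [LocallyFiniteOrder α] (f : α → M)
    {a b c : α} (hab : a ≤ b) (hbc : b ≤ c) :
    ∑ i ∈ Ico a b, f i + ∑ i ∈ Ico b c, f i = ∑ i ∈ Ico a c, f i := by
  rw [← sum_union (Ico_disjoint_Ico_consecutive a b c), Ico_union_Ico_eq_Ico hab hbc]

theorem sum_Ico_window_add_sum_Ico (f : ℤ → M) {s t n : ℤ} (hst : s ≤ t) (hn : 0 ≤ n) :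
    ∑ j ∈ Ico t (t + n), f j + ∑ j ∈ Ico s t, f j =
      ∑ j ∈ Ico s (s + n), f j + ∑ j ∈ Ico (s + n) (t + n), f j := by
  rw [add_comm, sum_Ico_consecutive' f hst (by omega), sum_Ico_consecutive' f (by omega) (by omega)]

theorem Function.Periodic.sum_Ico_add {f : ℤ → M} {L : ℤ} (hf : Periodic f L) (s t : ℤ) :
    ∑ j ∈ Ico (s + L) (t + L), f j = ∑ j ∈ Ico s t, f j := by
  rw [← sum_Ico_add']
  exact sum_congr rfl fun j _ => hf j

theorem Function.Periodic.sum_Ico_period {M : Type*} [AddCancelCommMonoid M] {f : ℤ → M} {L : ℤ}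
    (hf : Periodic f L) (hL : 0 ≤ L) (s t : ℤ) :
    ∑ j ∈ Ico s (s + L), f j = ∑ j ∈ Ico t (t + L), f j := by
  wlog hst : s ≤ t generalizing s t
  · exact (this t s (le_of_not_ge hst)).symm
  have := sum_Ico_window_add_sum_Ico f hst hL
  rw [hf.sum_Ico_add] at this
  exact (add_right_cancel this).symm

theorem sum_Ico_nat_eq_sum_Ico_int (f : ℤ → M) (k : ℤ) (p q : ℕ) :
    ∑ l ∈ Ico p q, f (k + l) = ∑ j ∈ Ico (k + p) (k + q), f j :=
  sum_nbij' (fun l : ℕ => k + l) (fun j => (j - k).toNat) (by intro l; simp)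
    (by intro j; simp; omega) (by intro l; simp) (by intro j; simp; omega) (fun _ _ => rfl)

variable {f : ℤ → ℝ} {g : ℝ} {s t : ℤ}

theorem sum_Ico_le_mul (hst : s ≤ t) (hf : ∀ j ∈ Ico s t, f j ≤ g) :
    ∑ j ∈ Ico s t, f j ≤ ((t : ℝ) - s) * g := by
  have := sum_le_card_nsmul _ _ _ hf
  rwa [Int.card_Ico, nsmul_eq_mul, ← Int.cast_natCast, Int.toNat_of_nonneg (by omega),
    Int.cast_sub] at this

theorem mul_le_sum_Ico (hst : s ≤ t) (hf : ∀ j ∈ Ico s t, g ≤ f j) :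
    ((t : ℝ) - s) * g ≤ ∑ j ∈ Ico s t, f j := by
  have := card_nsmul_le_sum _ _ _ hf
  rwa [Int.card_Ico, nsmul_eq_mul, ← Int.cast_natCast, Int.toNat_of_nonneg (by omega),
    Int.cast_sub] at this

theorem sum_Ico_window_le_of_slide_right {n : ℤ} (hst : s ≤ t) (hn : 0 ≤ n)
    (hgain : ∀ j ∈ Ico s t, g ≤ f j) (hloss : ∀ j ∈ Ico (s + n) (t + n), f j ≤ g) :
    ∑ j ∈ Ico t (t + n), f j ≤ ∑ j ∈ Ico s (s + n), f j := by
  have := sum_Ico_window_add_sum_Ico f hst hn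
  have := mul_le_sum_Ico hst hgain
  have := sum_Ico_le_mul (by omega) hloss
  push_cast at *
  linarith

theorem sum_Ico_window_le_of_slide_left {n : ℤ} (hts : t ≤ s) (hn : 0 ≤ n)
    (hloss : ∀ j ∈ Ico t s, f j ≤ g) (hgain : ∀ j ∈ Ico (t + n) (s + n), g ≤ f j) :
    ∑ j ∈ Ico t (t + n), f j ≤ ∑ j ∈ Ico s (s + n), f j := by
  have := sum_Ico_window_add_sum_Ico f hts hn
  have := sum_Ico_le_mul hts hloss
  have := mul_le_sum_Ico (by omega) hgain
  push_cast at *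
  linarith

/-- `[a, b]` is the main lobe of one period of `h`, and `k` ranges over the shifts whose long
window `[k, k + L0)` contains it. -/
theorem exists_window_sum_le_of_single_lobe {h : ℤ → ℝ} {L0 L a b : ℤ}
    (hper : Periodic h L) (hL0 : 0 < L0) (hL0L : L0 ≤ L)
    (hmain : ∀ j, a ≤ j → j ≤ b → g ≤ h j)
    (hside : ∀ j, b - L < j → j < a → h j ≤ g)
    (hwidth : b < a + L0) (hb : L0 ≤ b) (ha : a < L)
    (hC : b + 2 ≤ L → ((L : ℝ) - 1) * g ≤ ∑ j ∈ Ico 1 L, h j) :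
    ∃ k, b < k + L0 ∧ k ≤ a ∧ ∑ j ∈ Ico (k + L0) (k + L), h j ≤ ∑ j ∈ Ico L0 L, h j := by
  obtain ⟨n, hn, rfl⟩ : ∃ n, 0 ≤ n ∧ L = L0 + n := ⟨L - L0, by omega, by ring⟩
  have hside' : ∀ j, b < j → j < a + (L0 + n) → h j ≤ g := fun j h₁ h₂ => by
    rw [← hper.sub_eq j]
    exact hside _ (by omega) (by omega)
  by_cases hleft : L0 < a ∧ L0 + n ≤ b + 1
  · refine ⟨a, by omega, le_rfl, ?_⟩
    -- one period later, the short window of `a` is `[a - n, a)`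
    rw [show a + L0 = a - n + (L0 + n) by ring, hper.sum_Ico_add,
      show a = a - n + n by ring, add_sub_cancel_right]
    refine sum_Ico_window_le_of_slide_left (g := g) (by omega) hn (fun j hj => ?_) (fun j hj => ?_)
    · rw [mem_Ico] at hj
      exact hside j (by omega) (by omega)
    · rw [mem_Ico] at hj
      exact hmain j (by omega) (by omega)
  refine ⟨b + 1 - L0, by omega, by omega, ?_⟩
  rw [show b + 1 - L0 + L0 = b + 1 by ring, show b + 1 - L0 + (L0 + n) = b + 1 + n by ring]
  by_cases hright : a ≤ L0 ∧ b + 2 ≤ L0 + n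
  · refine sum_Ico_window_le_of_slide_right (g := g) (by omega) hn (fun j hj => ?_) (fun j hj => ?_)
    · rw [mem_Ico] at hj
      exact hmain j (by omega) (by omega)
    · rw [mem_Ico] at hj
      exact hside' j (by omega) (by omega)
  have hsidelobes : ∑ j ∈ Ico (b + 1) (b + 1 + n), h j ≤ n * g := by
    have := sum_Ico_le_mul (f := h) (g := g) (s := b + 1) (t := b + 1 + n) (by omega)
      fun j hj => hside' j (by rw [mem_Ico] at hj; omega) (by rw [mem_Ico] at hj; omega)
    push_cast at this
    linarith
  suffices n * g ≤ ∑ j ∈ Ico L0 (L0 + n), h j by linarith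
  by_cases haL0 : a ≤ L0
  · have := mul_le_sum_Ico (f := h) (g := g) (s := L0) (t := L0 + n) (by omega)
      fun j hj => hmain j (by rw [mem_Ico] at hj; omega) (by rw [mem_Ico] at hj; omega)
    push_cast at this
    linarith
  · have hsplit := sum_Ico_consecutive' h (a := 1) (b := L0) (c := L0 + n) (by omega) (by omega)
    have hoff := sum_Ico_le_mul (f := h) (g := g) (s := 1) (t := L0) (by omega)
      fun j hj => hside j (by rw [mem_Ico] at hj; omega) (by rw [mem_Ico] at hj; omega)
    have := hC (by omega)
    push_cast at hoff this
    linarith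

end WindowSums

theorem one_div_mul_add_one_div_mul_le {p q x y x' y' : ℝ} (hp : 0 < p) (hpq : p ≤ q)
    (hsum : x + y = x' + y') (hy : y ≤ y') : 1 / q * x + 1 / p * y ≤ 1 / q * x' + 1 / p * y' := by
  have := mul_nonneg (sub_nonneg.2 (one_div_le_one_div_of_le hp hpq)) (sub_nonneg.2 hy)
  rw [show x = x' + y' - y by linarith]
  linarith

theorem exists_int_forall_le_iff_lt_mul {c : ℝ} (hc : 0 < c) (x : ℝ) :
    ∃ a : ℤ, ∀ j : ℤ, a ≤ j ↔ x < j * c :=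
  ⟨⌊x / c⌋ + 1, fun j => by rw [Int.add_one_le_iff, Int.floor_lt, div_lt_iff₀ hc]⟩

theorem exists_int_forall_le_iff_mul_lt {c : ℝ} (hc : 0 < c) (y : ℝ) :
    ∃ b : ℤ, ∀ j : ℤ, j ≤ b ↔ j * c < y :=
  ⟨⌈y / c⌉ - 1, fun j => by rw [Int.le_sub_one_iff, Int.lt_ceil, lt_div_iff₀ hc]⟩

section Infimum

open Set

theorem csInf_image_le_of_forall_exists_le {α : Type*} {f : α → ℝ} {s t : Set α}
    (hf : BddBelow (f '' s)) (ht : t.Nonempty) (h : ∀ y ∈ t, ∃ x ∈ s, f x ≤ f y) :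
    sInf (f '' s) ≤ sInf (f '' t) :=
  le_csInf (ht.image f) <| forall_mem_image.2 fun y hy => by
    obtain ⟨x, hx, hxy⟩ := h y hy
    exact (csInf_le hf (mem_image_of_mem f hx)).trans hxy

theorem le_of_lt_mul_sInf_image {α : Type*} {f : α → ℝ} {S : Set α} {r x : ℝ}
    (hf : ∀ φ, 0 ≤ f φ) (hr : r ≤ 1) (hx : x < r * sInf (f '' S)) : ∀ φ ∈ S, x ≤ f φ := by
  intro φ hφ
  have hA : 0 ≤ sInf (f '' S) := Real.sInf_nonneg (forall_mem_image.2 fun φ _ => hf φ)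
  have hle : sInf (f '' S) ≤ f φ :=
    csInf_le ⟨0, forall_mem_image.2 fun φ _ => hf φ⟩ ⟨φ, hφ, rfl⟩
  nlinarith

end Infimum

section EquivalentPattern

open Real Set

noncomputable def equivPattern (G : ℝ → ℝ) (L L0 : ℕ) (φ : ℝ) : ℝ :=
  1 / (L0 : ℝ) * ∑ l ∈ Finset.range L0, G (φ - l * (2 * π / L)) +
    1 / ((L : ℝ) - L0) * ∑ l ∈ Finset.Ico L0 L, G (φ - l * (2 * π / L))

variable {G : ℝ → ℝ} {L L0 : ℕ}

theorem Function.Periodic.comp_sub_int_mul (hG : Periodic G (2 * π)) (hL : L ≠ 0) (χ : ℝ) :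
    Periodic (fun j : ℤ => G (χ - j * (2 * π / L))) L := fun j => by
  dsimp only
  rw [Int.cast_add, Int.cast_natCast, add_mul, mul_div_cancel₀ _ (Nat.cast_ne_zero.2 hL), ← sub_sub,
    hG.sub_eq]

theorem Function.Periodic.equivPattern (hG : Periodic G (2 * π)) (L L0 : ℕ) :
    Periodic (equivPattern G L L0) (2 * π) := fun φ => by
  simp only [_root_.equivPattern, add_sub_right_comm φ (2 * π),
    show ∀ x, G (x + 2 * π) = G x from hG]

theorem equivPattern_nonneg (hG : ∀ φ, 0 ≤ G φ) (hL0L : L0 ≤ L) (φ : ℝ) :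
    0 ≤ equivPattern G L L0 φ := by
  have : (L0 : ℝ) ≤ L := by exact_mod_cast hL0L
  have := Finset.sum_nonneg fun l (_ : l ∈ Finset.range L0) => hG (φ - l * (2 * π / L))
  have := Finset.sum_nonneg fun l (_ : l ∈ Finset.Ico L0 L) => hG (φ - l * (2 * π / L))
  have : 0 ≤ 1 / ((L : ℝ) - L0) := by rw [one_div_nonneg]; linarith
  unfold equivPattern
  positivity

theorem equivPattern_sub_int_mul (G : ℝ → ℝ) (L L0 : ℕ) (χ : ℝ) (k : ℤ) :
    equivPattern G L L0 (χ - k * (2 * π / L)) =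
      1 / (L0 : ℝ) * ∑ j ∈ Finset.Ico k (k + L0), G (χ - j * (2 * π / L)) +
      1 / ((L : ℝ) - L0) * ∑ j ∈ Finset.Ico (k + L0) (k + L), G (χ - j * (2 * π / L)) := by
  have hshift : ∀ l : ℕ, G (χ - k * (2 * π / L) - l * (2 * π / L)) =
      G (χ - ((k + l : ℤ) : ℝ) * (2 * π / L)) := fun l => by push_cast; ring_nf
  simp only [equivPattern, Finset.range_eq_Ico, hshift,
    sum_Ico_nat_eq_sum_Ico_int (fun j : ℤ => G (χ - j * (2 * π / L))), Nat.cast_zero, add_zero]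

theorem equivPattern_sub_int_mul_le (hG : Periodic G (2 * π)) (hLL0 : L ≤ 2 * L0)
    (hL0L : L0 < L) (χ : ℝ) (k : ℤ)
    (hW : ∑ j ∈ Finset.Ico (k + L0) (k + L), G (χ - j * (2 * π / L)) ≤
      ∑ j ∈ Finset.Ico (L0 : ℤ) L, G (χ - j * (2 * π / L))) :
    equivPattern G L L0 (χ - k * (2 * π / L)) ≤ equivPattern G L L0 χ := by
  have htotal := (hG.comp_sub_int_mul (by omega) χ).sum_Ico_period (Nat.cast_nonneg L) k 0
  rw [← sum_Ico_consecutive' _ (by omega : k ≤ k + L0) (by omega),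
    ← sum_Ico_consecutive' _ (by omega : (0 : ℤ) ≤ L0) (by omega), zero_add] at htotal
  have h₀ := equivPattern_sub_int_mul G L L0 χ 0
  simp only [Int.cast_zero, zero_mul, sub_zero, zero_add] at h₀
  rw [equivPattern_sub_int_mul, h₀]
  exact one_div_mul_add_one_div_mul_le (by rw [sub_pos]; exact_mod_cast hL0L)
    (by rw [sub_le_iff_le_add]; exact_mod_cast (by omega : L ≤ L0 + L0)) htotal hW

theorem Function.Periodic.le_on_Icc_of_le_on_abs {GSL φB : ℝ} (hG : Periodic G (2 * π))
    (hφB : 0 ≤ φB) (hside : ∀ φ : ℝ, φB ≤ |φ| → |φ| ≤ π → G φ ≤ GSL) (φ : ℝ) (h₁ : φB ≤ φ)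
    (h₂ : φ ≤ 2 * π - φB) : G φ ≤ GSL := by
  rcases le_or_gt φ π with hφ | hφ
  · exact hside φ (by rwa [abs_of_nonneg (by linarith)]) (by rwa [abs_of_nonneg (by linarith)])
  · rw [← hG.sub_eq φ]
    exact hside _ (by rw [abs_of_nonpos (by linarith)]; linarith)
      (by rw [abs_of_nonpos (by linarith)]; linarith)

theorem sub_one_mul_le_sum_Ico_one {GSL χ c : ℝ} (hL : 1 < L)
    (h : GSL ≤ 1 / ((L : ℝ) - 1) * ∑ l ∈ Finset.range (L - 1), G (χ - c - l * c)) :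
    (((L : ℤ) : ℝ) - 1) * GSL ≤ ∑ j ∈ Finset.Ico (1 : ℤ) L, G (χ - j * c) := by
  have hsum : ∑ l ∈ Finset.range (L - 1), G (χ - c - l * c) =
      ∑ j ∈ Finset.Ico (1 : ℤ) L, G (χ - j * c) := by
    rw [Finset.range_eq_Ico, show Finset.Ico (1 : ℤ) L =
      Finset.Ico (1 + ((0 : ℕ) : ℤ)) (1 + ((L - 1 : ℕ) : ℤ)) by congr 1; omega,
      ← sum_Ico_nat_eq_sum_Ico_int]
    refine Finset.sum_congr rfl fun l _ => ?_
    push_cast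
    ring_nf
  have hL1 : (0 : ℝ) < L - 1 := by
    rw [sub_pos]
    exact_mod_cast hL
  rw [hsum, one_div_mul_eq_div, le_div_iff₀ hL1] at h
  push_cast
  linarith

theorem sub_int_mul_mem_Icc {c χ φB : ℝ} {a b k : ℤ}
    (ha : ∀ j : ℤ, a ≤ j ↔ χ - φB < j * c) (hb : ∀ j : ℤ, j ≤ b ↔ j * c < χ + φB)
    (hk₁ : b < k + L0) (hk₂ : k ≤ a) : χ - k * c ∈ Icc (φB - c) (L0 * c - φB) := by
  have h₁ := (ha (k - 1)).not.1 (by omega)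
  have h₂ := (hb (k + L0)).not.1 (by omega)
  rw [not_lt] at h₁ h₂
  push_cast at h₁ h₂
  constructor <;> linarith

theorem exists_mem_Icc_equivPattern_le_of_lt {GSL φB : ℝ} (hG : Periodic G (2 * π))
    (hL0 : L < 2 * L0) (hL0L : L0 < L) (hφB : φB < π / 2)
    (hmain : ∀ φ ∈ Ioo (-φB) φB, GSL ≤ G φ)
    (hside : ∀ φ, φB ≤ φ → φ ≤ 2 * π - φB → G φ ≤ GSL)
    (hC : ∀ φ ∈ Icc (φB - 2 * π / L) (((L : ℝ) - 1) * (2 * π / L) - φB),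
      GSL ≤ 1 / ((L : ℝ) - 1) * ∑ l ∈ Finset.range (L - 1), G (φ - l * (2 * π / L)))
    {χ : ℝ} (hχ₁ : L0 * (2 * π / L) - φB < χ) (hχ₂ : χ < φB - 2 * π / L + 2 * π) :
    ∃ ψ ∈ Icc (φB - 2 * π / L) (L0 * (2 * π / L) - φB),
      equivPattern G L L0 ψ ≤ equivPattern G L L0 χ := by
  have hL : (0 : ℝ) < L := by exact_mod_cast (Nat.zero_le L0).trans_lt hL0L
  set c := 2 * π / L with hc_def
  have hc : 0 < c := by positivity
  have hLc : (L : ℝ) * c = 2 * π := by rw [hc_def]; field_simp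
  have hπ : π < L0 * c := by
    have : (L : ℝ) < 2 * L0 := by exact_mod_cast hL0
    nlinarith
  obtain ⟨a, ha⟩ := exists_int_forall_le_iff_lt_mul hc (χ - φB)
  obtain ⟨b, hb⟩ := exists_int_forall_le_iff_mul_lt hc (χ + φB)
  have hlobe : ∀ j, a ≤ j → j ≤ b → GSL ≤ G (χ - j * c) := fun j h₁ h₂ =>
    hmain _ ⟨by linarith [(hb j).1 h₂], by linarith [(ha j).1 h₁]⟩
  have hoff : ∀ j, b - L < j → j < a → G (χ - j * c) ≤ GSL := fun j h₁ h₂ => by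
    have h₁' : ¬ j + L ≤ b := by omega
    rw [hb, not_lt] at h₁'
    rw [← not_le, ha, not_lt] at h₂
    push_cast at h₁'
    exact hside _ (by linarith) (by linarith)
  have hwidth : b < a + L0 := by
    by_contra! h
    have h₁ := (hb _).1 h
    have h₂ := (ha a).1 le_rfl
    push_cast at h₁
    linarith
  have hbL0 : (L0 : ℤ) ≤ b := (hb _).2 (by push_cast; linarith)
  have haL : a < L := by
    have := (ha (L - 1)).2 (by push_cast; linarith)
    omega
  have hCsum : b + 2 ≤ L →
      (((L : ℤ) : ℝ) - 1) * GSL ≤ ∑ j ∈ Finset.Ico (1 : ℤ) L, G (χ - j * c) := fun hbL => by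
    have hL1 := (hb (L - 1)).not.1 (by omega)
    rw [not_lt] at hL1
    push_cast at hL1
    exact sub_one_mul_le_sum_Ico_one (by omega) (hC (χ - c) ⟨by linarith, by linarith⟩)
  obtain ⟨k, hk₁, hk₂, hW⟩ := exists_window_sum_le_of_single_lobe
    (hG.comp_sub_int_mul (by omega) χ) (by omega) (by omega) hlobe hoff hwidth hbL0 haL hCsum
  exact ⟨χ - k * c, sub_int_mul_mem_Icc ha hb hk₁ hk₂,
    equivPattern_sub_int_mul_le hG (by omega) hL0L χ k hW⟩

theorem exists_mem_Icc_equivPattern_le {GSL φB : ℝ} (hG : Periodic G (2 * π))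
    (hL0 : L < 2 * L0) (hL0L : L0 < L) (hφB : φB < π / 2)
    (hmain : ∀ φ ∈ Ioo (-φB) φB, GSL ≤ G φ)
    (hside : ∀ φ, φB ≤ φ → φ ≤ 2 * π - φB → G φ ≤ GSL)
    (hC : ∀ φ ∈ Icc (φB - 2 * π / L) (((L : ℝ) - 1) * (2 * π / L) - φB),
      GSL ≤ 1 / ((L : ℝ) - 1) * ∑ l ∈ Finset.range (L - 1), G (φ - l * (2 * π / L)))
    (χ : ℝ) : ∃ ψ ∈ Icc (φB - 2 * π / L) (L0 * (2 * π / L) - φB),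
      equivPattern G L L0 ψ ≤ equivPattern G L L0 χ := by
  obtain ⟨χ', ⟨hχ'₁, hχ'₂⟩, hχ'⟩ :=
    (hG.equivPattern L L0).exists_mem_Ico two_pi_pos χ (φB - 2 * π / L)
  rw [hχ']
  by_cases hχ'₃ : χ' ≤ L0 * (2 * π / L) - φB
  · exact ⟨χ', ⟨hχ'₁, hχ'₃⟩, le_rfl⟩
  · exact exists_mem_Icc_equivPattern_le_of_lt hG hL0 hL0L hφB hmain hside hC
      (not_le.1 hχ'₃) hχ'₂

end EquivalentPattern

open Real Set

theorem stmt15_general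
(L : ℕ)
    (G : ℝ → ℝ) (hGnn : ∀ φ, 0 ≤ G φ)
    (hGper : ∀ φ, G (φ + 2 * Real.pi) = G φ)
    (GSL φB : ℝ)
    (hφB0 : 0 < φB) (hφBhalf : φB < Real.pi / 2)
    (hmain : ∀ φ ∈ Set.Ioo (-φB) φB, GSL < G φ)
    (hside : ∀ φ : ℝ, φB ≤ |φ| → |φ| ≤ Real.pi → G φ ≤ GSL)
    (Gl : ℕ → ℝ → ℝ)
    (hGl : ∀ l φ, Gl l φ = G (φ - l * (2 * Real.pi) / L))
-- Condition (C)
    (hC : GSL < ((L / 2 : ℕ) : ℝ) / (((L + 1) / 2 : ℕ) : ℝ) *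
      sInf ((fun φ => (1 / ((L : ℝ) - 1)) * ∑ l ∈ Finset.range (L - 1), Gl l φ) ''
        Set.Icc (φB - 2 * Real.pi / L) (((L : ℝ) - 1) * (2 * Real.pi) / L - φB)))
(Gbar : ℕ → ℝ → ℝ)
    (hGbar : ∀ L0 φ, Gbar L0 φ =
      (1 / (L0 : ℝ)) * ∑ l ∈ Finset.range L0, Gl l φ +
      (1 / ((L : ℝ) - L0)) * ∑ l ∈ Finset.Ico L0 L, Gl l φ) :
    ∀ L0 : ℕ, (L : ℝ) / 2 < (L0 : ℝ) → L0 ≤ L - 1 →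
      sInf (Gbar L0 '' Set.Ico (0:ℝ) (2 * Real.pi)) =
      sInf (Gbar L0 ''
        Set.Icc (-(2 * Real.pi) / L + φB) ((L0 : ℝ) * (2 * Real.pi) / L - φB)) := by
  intro L0 hhalf hle
  have hG : Periodic G (2 * π) := hGper
  have hL0 : L < 2 * L0 := by
    rw [div_lt_iff₀ two_pos] at hhalf
    exact_mod_cast hhalf.trans_eq (mul_comm _ _)
  have hL0L : L0 < L := by omega
  have hdiv : ∀ x : ℝ, x * (2 * π) / L = x * (2 * π / L) := fun x => mul_div_assoc x _ _
  simp only [hGl, hdiv] at hC hGbar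
  have hCpt := le_of_lt_mul_sInf_image
    (fun φ => mul_nonneg (one_div_nonneg.2 (sub_nonneg.2 (by exact_mod_cast (by omega : 1 ≤ L))))
      (Finset.sum_nonneg fun l _ => hGnn _))
    (div_le_one_of_le₀ (by exact_mod_cast (by omega : L / 2 ≤ (L + 1) / 2)) (Nat.cast_nonneg _)) hC
  have key := exists_mem_Icc_equivPattern_le hG hL0 hL0L hφBhalf (fun φ hφ => (hmain φ hφ).le)
    (hG.le_on_Icc_of_le_on_abs hφB0.le hside) hCpt
  have hbdd : BddBelow (range (equivPattern G L L0)) :=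
    ⟨0, forall_mem_range.2 (equivPattern_nonneg hGnn hL0L.le)⟩
  rw [show Gbar L0 = equivPattern G L L0 from funext (hGbar L0), neg_div, ← sub_eq_neg_add, hdiv]
  apply le_antisymm
  · refine csInf_image_le_of_forall_exists_le (hbdd.mono (image_subset_range _ _))
      ((key 0).imp fun _ h => h.1) fun ψ _ => ?_
    obtain ⟨φ, hφ, hφψ⟩ := (hG.equivPattern L L0).exists_mem_Ico₀ two_pi_pos ψ
    exact ⟨φ, hφ, hφψ.ge⟩
  · exact csInf_image_le_of_forall_exists_le (hbdd.mono (image_subset_range _ _))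
      ⟨0, le_rfl, two_pi_pos⟩ fun χ _ => key χ

/-- Appendix Lemma 7: under Condition (C), for every group size
`L_0` with `L/2 < L_0 ≤ L−1`, the infimum over `[0,2π)` of the equivalent
pattern `Ḡ(·, L_0)` is attained on the all-sidelobe region `I_0(L_0)`. -/
theorem stmt15
(L : ℕ) (hL : 2 ≤ L)
    (G : ℝ → ℝ) (hGnn : ∀ φ, 0 ≤ G φ)
    (hGper : ∀ φ, G (φ + 2 * Real.pi) = G φ)
    (GSL φB : ℝ) (hGSL : 0 ≤ GSL)
    (hφB0 : 0 < φB) (hφBhalf : φB < Real.pi / 2)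
    (hmain : ∀ φ ∈ Set.Ioo (-φB) φB, GSL < G φ)
    (hside : ∀ φ : ℝ, φB ≤ |φ| → |φ| ≤ Real.pi → G φ ≤ GSL)
    (Gl : ℕ → ℝ → ℝ)
    (hGl : ∀ l φ, Gl l φ = G (φ - l * (2 * Real.pi) / L))
-- Condition (C)
    (hC : GSL < ((L / 2 : ℕ) : ℝ) / (((L + 1) / 2 : ℕ) : ℝ) *
      sInf ((fun φ => (1 / ((L : ℝ) - 1)) * ∑ l ∈ Finset.range (L - 1), Gl l φ) ''
        Set.Icc (φB - 2 * Real.pi / L) (((L : ℝ) - 1) * (2 * Real.pi) / L - φB)))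
(Gbar : ℕ → ℝ → ℝ)
    (hGbar : ∀ L0 φ, Gbar L0 φ =
      (1 / (L0 : ℝ)) * ∑ l ∈ Finset.range L0, Gl l φ +
      (1 / ((L : ℝ) - L0)) * ∑ l ∈ Finset.Ico L0 L, Gl l φ) :
    ∀ L0 : ℕ, (L : ℝ) / 2 < (L0 : ℝ) → L0 ≤ L - 1 →
      sInf (Gbar L0 '' Set.Ico (0:ℝ) (2 * Real.pi)) =
      sInf (Gbar L0 ''
        Set.Icc (-(2 * Real.pi) / L + φB) ((L0 : ℝ) * (2 * Real.pi) / L - φB)) :=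
  stmt15_general L G hGnn hGper GSL φB hφB0 hφBhalf hmain hside Gl hGl hC Gbar hGbar
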